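/- arXiv:2202.10296 — 2 statements merged into one kernel-verified Lean document; each statement's English description precedes it below -/
import Mathlib

section
/- For independent nonnegative integer-valued random variables X and Y, ρ(X+Y) ≤ max(ρ(X), ρ(Y)), where ρ(X) = inf{α ∈ [0,1] : X ∈ M_α}. -/
open scoped BigOperators

/-- `IsPMF p` : `p` is a probability mass function on `ℕ`. -/
def IsPMF (p : ℕ → ℝ) : Prop :=
  (∀ n, 0 ≤ p n) ∧ HasSum p 1

/-- Binomial `α`-thinning at the level of distributions:
`thin α p k = P(α ∘ X = k)` when `X` has pmf `p`. -/
noncomputable def thin (α : ℝ) (p : ℕ → ℝ) (k : ℕ) : ℝ :=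
  ∑' n : ℕ, (n.choose k : ℝ) * α ^ k * (1 - α) ^ (n - k) * p n

/-- Convolution of two pmfs on `ℕ` (law of the sum of independent variables). -/
noncomputable def conv (p q : ℕ → ℝ) (n : ℕ) : ℝ :=
  ∑ k ∈ Finset.range (n + 1), p k * q (n - k)

/-- `MemM α p` : the distribution `p` is an `α`-thinned distribution, i.e. `p ∈ M_α`. -/
def MemM (α : ℝ) (p : ℕ → ℝ) : Prop :=
  ∃ q : ℕ → ℝ, IsPMF q ∧ ∀ k, p k = thin α q k

/-- `rho p` : the minimal thinning parameter `ρ(X)`. -/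
noncomputable def rho (p : ℕ → ℝ) : ℝ :=
  sInf {α : ℝ | α ∈ Set.Icc (0:ℝ) 1 ∧ MemM α p}

/-!
Thinning is a semigroup, `α ∘ (β ∘ Z) ∼ (α β) ∘ Z`, so `M_α ⊆ M_γ` whenever `α ≤ γ`; and it
commutes with independent sums, `α ∘ Z₁ + α ∘ Z₂ ∼ α ∘ (Z₁ + Z₂)`, so each `M_γ` is closed under
convolution. Hence for every `γ > max (ρ X) (ρ Y)` the laws of `X` and `Y`, and therefore that of
`X + Y`, lie in `M_γ`. On the binomial kernel the two facts are the identities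
`Bin(n, α β) = Bin(Bin(n, β), α)` and `Bin(a + b, α) = Bin(a, α) * Bin(b, α)`.
-/

open Finset

noncomputable def binomProb (α : ℝ) (n k : ℕ) : ℝ :=
  (n.choose k : ℝ) * α ^ k * (1 - α) ^ (n - k)

section BinomProb

variable {α : ℝ}

lemma binomProb_eq_zero_of_lt {n k : ℕ} (h : n < k) : binomProb α n k = 0 := by
  simp [binomProb, Nat.choose_eq_zero_of_lt h]

lemma binomProb_nonneg (h0 : 0 ≤ α) (h1 : α ≤ 1) (n k : ℕ) : 0 ≤ binomProb α n k := by
  have : 0 ≤ 1 - α := by linarith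
  unfold binomProb
  positivity

variable (α) in
lemma sum_binomProb (n : ℕ) : ∑ k ∈ range (n + 1), binomProb α n k = 1 :=
  calc ∑ k ∈ range (n + 1), binomProb α n k = (α + (1 - α)) ^ n := by
        rw [add_pow]
        exact sum_congr rfl fun k _ => by unfold binomProb; ring
    _ = 1 := by rw [add_sub_cancel, one_pow]

variable (α) in
lemma hasSum_binomProb (n : ℕ) : HasSum (binomProb α n) 1 := by
  have h : HasSum (binomProb α n) (∑ k ∈ range (n + 1), binomProb α n k) :=
    hasSum_sum_of_ne_finset_zero fun k hk => binomProb_eq_zero_of_lt (by simpa using hk)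
  rwa [sum_binomProb] at h

lemma binomProb_le_one (h0 : 0 ≤ α) (h1 : α ≤ 1) (n k : ℕ) : binomProb α n k ≤ 1 :=
  le_hasSum (hasSum_binomProb α n) k fun j _ => binomProb_nonneg h0 h1 n j

variable (α) in
lemma binomProb_mul (β : ℝ) (n k : ℕ) :
    binomProb (α * β) n k = ∑ m ∈ range (n + 1), binomProb β n m * binomProb α m k := by
  rcases lt_or_ge n k with hnk | hkn
  · rw [binomProb_eq_zero_of_lt hnk]
    refine (sum_eq_zero fun m hm => ?_).symm
    have hmk : m < k := by rw [mem_range] at hm; omega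
    rw [binomProb_eq_zero_of_lt hmk, mul_zero]
  obtain ⟨d, rfl⟩ := Nat.exists_eq_add_of_le hkn
  rw [show k + d + 1 = k + (d + 1) by ring, sum_range_add,
    sum_eq_zero fun m hm => by rw [binomProb_eq_zero_of_lt (mem_range.1 hm), mul_zero], zero_add]
  have hterm : ∀ j ∈ range (d + 1), binomProb β (k + d) (k + j) * binomProb α (k + j) k =
      ((k + d).choose k * (α * β) ^ k) * (((1 - α) * β) ^ j * (1 - β) ^ (d - j) * d.choose j) := by
    intro j _
    have hc : ((k + d).choose (k + j) : ℝ) * (k + j).choose k = (k + d).choose k * d.choose j := by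
      exact_mod_cast (Nat.choose_mul (Nat.le_add_right k j)).trans (by simp)
    simp only [binomProb, Nat.add_sub_cancel_left, Nat.add_sub_add_left, mul_pow]
    linear_combination (α ^ k * (1 - α) ^ j * β ^ k * β ^ j * (1 - β) ^ (d - j)) * hc
  rw [sum_congr rfl hterm, ← mul_sum, ← add_pow, binomProb, Nat.add_sub_cancel_left]
  ring

variable (α) in
lemma binomProb_add (a b : ℕ) :
    binomProb α (a + b) = conv (binomProb α a) (binomProb α b) := by
  funext n
  rw [conv, binomProb, Nat.add_choose_eq,
    Finset.Nat.sum_antidiagonal_eq_sum_range_succ fun i j => a.choose i * b.choose j,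
    Nat.cast_sum, sum_mul, sum_mul]
  refine sum_congr rfl fun j hj => ?_
  have hjn : j ≤ n := Nat.lt_succ_iff.1 (mem_range.1 hj)
  rcases lt_or_ge a j with ha | ha
  · simp [binomProb_eq_zero_of_lt ha, Nat.choose_eq_zero_of_lt ha]
  rcases lt_or_ge b (n - j) with hb | hb
  · simp [binomProb_eq_zero_of_lt hb, Nat.choose_eq_zero_of_lt hb]
  have hα : α ^ n = α ^ j * α ^ (n - j) := by rw [← pow_add, Nat.add_sub_cancel' hjn]
  have hβ : (1 - α) ^ (a + b - n) = (1 - α) ^ (a - j) * (1 - α) ^ (b - (n - j)) := by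
    rw [← pow_add]; congr 1; omega
  rw [binomProb, binomProb, hα, hβ]
  push_cast
  ring

end BinomProb

lemma hasSum_of_hasSum_prod_rows_cols {ι κ : Type*} {F : ι × κ → ℝ} (hF : 0 ≤ F)
    {r : ι → ℝ} {c : κ → ℝ} {S : ℝ} (hrow : ∀ i, HasSum (fun k => F (i, k)) (r i))
    (hcol : ∀ k, HasSum (fun i => F (i, k)) (c k)) (hr : HasSum r S) : HasSum c S := by
  obtain ⟨S', hS'⟩ : Summable F := (summable_prod_of_nonneg hF).2
    ⟨fun i => (hrow i).summable, by simpa only [fun i => (hrow i).tsum_eq] using hr.summable⟩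
  obtain rfl : S' = S := (hS'.prod_fiberwise hrow).unique hr
  exact ((Equiv.prodComm κ ι).hasSum_iff.2 hS').prod_fiberwise hcol

lemma hasSum_conv_of_nonneg {f g : ℕ → ℝ} {a b : ℝ} (hf0 : 0 ≤ f) (hg0 : 0 ≤ g)
    (hf : HasSum f a) (hg : HasSum g b) : HasSum (conv f g) (a * b) := by
  have hfg := hf.summable.mul_of_nonneg hg.summable hf0 hg0
  have h := (summable_sum_mul_range_of_summable_mul hfg).hasSum
  rwa [← hf.summable.tsum_mul_tsum_eq_tsum_sum_range hg.summable hfg, hf.tsum_eq, hg.tsum_eq] at h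

section Thin

variable {α β : ℝ} {p q : ℕ → ℝ}

lemma thin_eq_tsum (α : ℝ) (q : ℕ → ℝ) (k : ℕ) : thin α q k = ∑' n, binomProb α n k * q n :=
  rfl

lemma hasSum_thin (h0 : 0 ≤ α) (h1 : α ≤ 1) (hq : IsPMF q) (k : ℕ) :
    HasSum (fun n => binomProb α n k * q n) (thin α q k) :=
  (Summable.of_nonneg_of_le (fun n => mul_nonneg (binomProb_nonneg h0 h1 n k) (hq.1 n))
    (fun n => mul_le_of_le_one_left (hq.1 n) (binomProb_le_one h0 h1 n k))
    hq.2.summable).hasSum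

lemma isPMF_thin (h0 : 0 ≤ α) (h1 : α ≤ 1) (hq : IsPMF q) : IsPMF (thin α q) := by
  refine ⟨fun k => (hasSum_thin h0 h1 hq k).nonneg fun n =>
    mul_nonneg (binomProb_nonneg h0 h1 n k) (hq.1 n), ?_⟩
  refine hasSum_of_hasSum_prod_rows_cols (F := fun x => binomProb α x.1 x.2 * q x.1)
    (fun x => mul_nonneg (binomProb_nonneg h0 h1 _ _) (hq.1 _)) (fun n => ?_)
    (hasSum_thin h0 h1 hq) hq.2
  simpa using (hasSum_binomProb α n).mul_right (q n)

lemma thin_one (q : ℕ → ℝ) : thin 1 q = q := by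
  funext k
  rw [thin, tsum_eq_single k]
  · simp
  · intro n hn
    rcases hn.lt_or_gt with h | h
    · simp [Nat.choose_eq_zero_of_lt h]
    · simp [zero_pow (Nat.sub_ne_zero_of_lt h)]

lemma thin_thin (hα0 : 0 ≤ α) (hα1 : α ≤ 1) (hβ0 : 0 ≤ β) (hβ1 : β ≤ 1) (hq : IsPMF q) :
    thin α (thin β q) = thin (α * β) q := by
  funext k
  have hαβ0 : 0 ≤ α * β := mul_nonneg hα0 hβ0
  have hαβ1 : α * β ≤ 1 := mul_le_one₀ hα1 hβ0 hβ1
  have hrow (n : ℕ) : HasSum (fun m => binomProb α m k * (binomProb β n m * q n))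
      (binomProb (α * β) n k * q n) := by
    have hval : binomProb (α * β) n k * q n =
        ∑ m ∈ range (n + 1), binomProb α m k * (binomProb β n m * q n) := by
      rw [binomProb_mul, sum_mul]
      exact sum_congr rfl fun m _ => by ring
    rw [hval]
    exact hasSum_sum_of_ne_finset_zero fun m hm => by
      have hnm : n < m := by simpa using hm
      rw [binomProb_eq_zero_of_lt hnm, zero_mul, mul_zero]
  have h : HasSum (fun m => binomProb α m k * thin β q m) (thin (α * β) q k) :=
    hasSum_of_hasSum_prod_rows_cols
      (F := fun x => binomProb α x.2 k * (binomProb β x.1 x.2 * q x.1))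
      (fun x => mul_nonneg (binomProb_nonneg hα0 hα1 _ _)
        (mul_nonneg (binomProb_nonneg hβ0 hβ1 _ _) (hq.1 _)))
      hrow (fun m => (hasSum_thin hβ0 hβ1 hq m).mul_left _) (hasSum_thin hαβ0 hαβ1 hq k)
  rw [thin_eq_tsum]
  exact h.tsum_eq

lemma isPMF_conv (hp : IsPMF p) (hq : IsPMF q) : IsPMF (conv p q) :=
  ⟨fun n => sum_nonneg fun k _ => mul_nonneg (hp.1 k) (hq.1 (n - k)),
    by simpa using hasSum_conv_of_nonneg hp.1 hq.1 hp.2 hq.2⟩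

lemma conv_thin (h0 : 0 ≤ α) (h1 : α ≤ 1) (hp : IsPMF p) (hq : IsPMF q) :
    conv (thin α p) (thin α q) = thin α (conv p q) := by
  funext n
  have hsplit (j : ℕ) : HasSum
      (conv (fun a => binomProb α a j * p a) (fun b => binomProb α b (n - j) * q b))
      (thin α p j * thin α q (n - j)) :=
    hasSum_conv_of_nonneg (fun a => mul_nonneg (binomProb_nonneg h0 h1 _ _) (hp.1 a))
      (fun b => mul_nonneg (binomProb_nonneg h0 h1 _ _) (hq.1 b))
      (hasSum_thin h0 h1 hp j) (hasSum_thin h0 h1 hq (n - j))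
  have hregroup (m : ℕ) : ∑ j ∈ range (n + 1),
      conv (fun a => binomProb α a j * p a) (fun b => binomProb α b (n - j) * q b) m =
      binomProb α m n * conv p q m := by
    simp only [conv]
    rw [sum_comm, mul_sum]
    refine sum_congr rfl fun k hk => ?_
    rw [← Nat.add_sub_cancel' (Nat.lt_succ_iff.1 (mem_range.1 hk)), binomProb_add, conv, sum_mul,
      Nat.add_sub_cancel_left]
    exact sum_congr rfl fun j _ => by ring
  have h := hasSum_sum fun j (_ : j ∈ range (n + 1)) => hsplit j
  rw [funext hregroup] at h
  rw [thin_eq_tsum]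
  exact h.tsum_eq.symm

end Thin

section Rho

variable {α γ : ℝ} {p q : ℕ → ℝ}

lemma memM_one (hp : IsPMF p) : MemM 1 p :=
  ⟨p, hp, fun k => by rw [thin_one]⟩

lemma MemM.mono (h : MemM α p) (hα : 0 ≤ α) (hαγ : α ≤ γ) (hγ1 : γ ≤ 1) : MemM γ p := by
  rcases hαγ.eq_or_lt with rfl | hαγ
  · exact h
  have hγ0 : 0 < γ := hα.trans_lt hαγ
  obtain ⟨r, hr, hpr⟩ := h
  have hδ0 : 0 ≤ α / γ := div_nonneg hα hγ0.le
  have hδ1 : α / γ ≤ 1 := (div_le_one hγ0).2 hαγ.le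
  refine ⟨thin (α / γ) r, isPMF_thin hδ0 hδ1 hr, fun k => ?_⟩
  rw [hpr, thin_thin hγ0.le hγ1 hδ0 hδ1 hr, mul_div_cancel₀ α hγ0.ne']

lemma memM_conv (hp : MemM γ p) (hq : MemM γ q) (hγ0 : 0 ≤ γ) (hγ1 : γ ≤ 1) :
    MemM γ (conv p q) := by
  obtain ⟨p', hp', hpp'⟩ := hp
  obtain ⟨q', hq', hqq'⟩ := hq
  refine ⟨conv p' q', isPMF_conv hp' hq', fun n => ?_⟩
  rw [← conv_thin hγ0 hγ1 hp' hq', ← funext hpp', ← funext hqq']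

lemma rho_nonneg (p : ℕ → ℝ) : 0 ≤ rho p :=
  Real.sInf_nonneg fun _ hα => hα.1.1

lemma memM_of_rho_lt (hp : IsPMF p) (hγ : rho p < γ) (hγ1 : γ ≤ 1) : MemM γ p := by
  have hne : {α : ℝ | α ∈ Set.Icc (0:ℝ) 1 ∧ MemM α p}.Nonempty := ⟨1, by simp, memM_one hp⟩
  obtain ⟨α, ⟨⟨hα0, -⟩, hα⟩, hαγ⟩ := exists_lt_of_csInf_lt hne hγ
  exact hα.mono hα0 hαγ.le hγ1

lemma rho_le (h : MemM α p) (hα0 : 0 ≤ α) (hα1 : α ≤ 1) : rho p ≤ α :=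
  csInf_le ⟨0, fun _ hβ => hβ.1.1⟩ ⟨⟨hα0, hα1⟩, h⟩

lemma rho_le_of_forall_memM {a : ℝ} (hp : IsPMF p) (ha : 0 ≤ a)
    (h : ∀ γ, a < γ → γ ≤ 1 → MemM γ p) : rho p ≤ a := by
  refine le_of_forall_gt_imp_ge_of_dense fun γ hγ => ?_
  rcases le_or_gt 1 γ with h1 | h1
  · exact (rho_le (memM_one hp) zero_le_one le_rfl).trans h1
  · exact rho_le (h γ hγ h1.le) (ha.trans hγ.le) h1.le

end Rho

/-- `ρ(X+Y) ≤ max(ρ(X), ρ(Y))` for independent `X, Y`. -/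
theorem stmt_7 (p q : ℕ → ℝ) (hp : IsPMF p) (hq : IsPMF q) :
    rho (conv p q) ≤ max (rho p) (rho q) := by
  refine rho_le_of_forall_memM (isPMF_conv hp hq) ((rho_nonneg p).trans (le_max_left _ _))
    fun γ hγ hγ1 => ?_
  have hγ0 : 0 ≤ γ := (rho_nonneg p).trans ((le_max_left _ _).trans hγ.le)
  exact memM_conv (memM_of_rho_lt hp ((le_max_left _ _).trans_lt hγ) hγ1)
    (memM_of_rho_lt hq ((le_max_right _ _).trans_lt hγ) hγ1) hγ0 hγ1
end

section
/- Let X be a nonnegative integer-valued random variable with bounded support. Then ρ(X) = 1 (i.e., X is not an α-thinned distribution for any α < 1) if and only if the support of X contains a hole, i.e., there exists n ≥ 1 with P(X=n) > 0 = P(X=n−1). -/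
open scoped BigOperators

/-!
Binomial thinning acts on probability generating functions by `G(s) ↦ G(1 - α + α s)`, so
thinnings compose multiplicatively, `thin α ∘ thin β = thin (α β)`, for all real `α, β` as long
as the distribution is finitely supported.

A hole `p n = 0 < p (n + 1)` rules out `p = thin α q` with `α < 1`: some atom `m ≥ n + 1` of `q`
feeds every level `k ≤ m`, in particular level `n`. Without holes the support of `p` is an
interval `{0, …, M}`; then `thin β p` depends continuously on `β`, vanishes wherever `p` does and
equals `p` at `β = 1`, so for some `β > 1` it is a pmf `q`, and `p = thin β⁻¹ q`.
-/

open Finset Filter Topology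

section Thinning

variable {α β : ℝ} {p q : ℕ → ℝ} {N : ℕ}

lemma choose_mul_pow_mul_pow_le_one (h0 : 0 ≤ α) (h1 : α ≤ 1) (n k : ℕ) :
    (n.choose k : ℝ) * α ^ k * (1 - α) ^ (n - k) ≤ 1 := by
  rcases le_or_gt k n with hkn | hnk
  · have h1' := sub_nonneg.2 h1
    calc (n.choose k : ℝ) * α ^ k * (1 - α) ^ (n - k)
        = α ^ k * (1 - α) ^ (n - k) * n.choose k := by ring
      _ ≤ ∑ j ∈ range (n + 1), α ^ j * (1 - α) ^ (n - j) * n.choose j :=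
          single_le_sum (f := fun j => α ^ j * (1 - α) ^ (n - j) * n.choose j)
            (fun j _ => by positivity) (mem_range.2 (Nat.lt_succ_of_le hkn))
      _ = 1 := by rw [← add_pow, add_sub_cancel, one_pow]
  · simp [Nat.choose_eq_zero_of_lt hnk]

lemma thin_summable (h0 : 0 ≤ α) (h1 : α ≤ 1) (hq : IsPMF q) (k : ℕ) :
    Summable fun n => (n.choose k : ℝ) * α ^ k * (1 - α) ^ (n - k) * q n :=
  Summable.of_nonneg_of_le (fun n => by have := sub_nonneg.2 h1; have := hq.1 n; positivity)
    (fun n => mul_le_of_le_one_left (hq.1 n) (choose_mul_pow_mul_pow_le_one h0 h1 n k))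
    hq.2.summable

lemma thin_pos_of_thin_succ_pos (h0 : 0 ≤ α) (h1 : α < 1) (hq : IsPMF q) {n : ℕ}
    (h : 0 < thin α q (n + 1)) : 0 < thin α q n := by
  obtain ⟨m, hm⟩ :
      ∃ m, (m.choose (n + 1) : ℝ) * α ^ (n + 1) * (1 - α) ^ (m - (n + 1)) * q m ≠ 0 := by
    by_contra! hall
    simp [thin, hall] at h
  have hnm : n + 1 ≤ m := by
    by_contra! hlt
    simp [Nat.choose_eq_zero_of_lt hlt] at hm
  have hα : 0 < α := h0.lt_of_ne (by rintro rfl; simp at hm)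
  have hqm : 0 < q m := (hq.1 m).lt_of_ne (by rintro hq0; simp [← hq0] at hm)
  have h1' := sub_pos.2 h1
  have hchoose : 0 < (m.choose n : ℝ) := by exact_mod_cast Nat.choose_pos (by omega)
  calc (0 : ℝ) < (m.choose n : ℝ) * α ^ n * (1 - α) ^ (m - n) * q m := by positivity
    _ ≤ thin α q n := (thin_summable h0 h1.le hq n).le_tsum m fun j _ => by
        have := hq.1 j; positivity

lemma not_memM_of_hole {n : ℕ} (hpn : 0 < p (n + 1)) (hpn1 : p n = 0) (h0 : 0 ≤ α) (h1 : α < 1) :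
    ¬ MemM α p := by
  rintro ⟨q, hq, hpq⟩
  have := thin_pos_of_thin_succ_pos h0 h1 hq (hpq (n + 1) ▸ hpn)
  rw [← hpq, hpn1] at this
  exact this.false

lemma thin_one_s17 (p : ℕ → ℝ) (k : ℕ) : thin 1 p k = p k := by
  rw [thin, tsum_eq_single k]
  · simp
  · intro n hn
    rcases hn.lt_or_gt with h | h
    · simp [Nat.choose_eq_zero_of_lt h]
    · simp [Nat.sub_ne_zero_of_lt h]

lemma thin_zero_zero (p : ℕ → ℝ) : thin 0 p 0 = ∑' n, p n := by
  simp [thin]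

lemma thin_eq_zero {k : ℕ} (h : ∀ n, k ≤ n → p n = 0) (α : ℝ) : thin α p k = 0 := by
  refine (tsum_congr fun n => ?_).trans tsum_zero
  rcases lt_or_ge n k with hnk | hkn
  · simp [Nat.choose_eq_zero_of_lt hnk]
  · simp [h n hkn]

lemma thin_eq_zero_of_lt (hp : ∀ k, N < k → p k = 0) (α : ℝ) (k : ℕ) (hk : N < k) :
    thin α p k = 0 :=
  thin_eq_zero (fun n hn => hp n (hk.trans_le hn)) α

lemma thin_eq_sum (hp : ∀ k, N < k → p k = 0) (α : ℝ) (k : ℕ) :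
    thin α p k = ∑ n ∈ range (N + 1), (n.choose k : ℝ) * α ^ k * (1 - α) ^ (n - k) * p n :=
  tsum_eq_sum fun n hn => by rw [hp n (by simpa using hn), mul_zero]

lemma sum_choose_mul_pow_mul_choose_mul_pow (α β : ℝ) (m k : ℕ) :
    ∑ n ∈ range (m + 1), (n.choose k : ℝ) * α ^ k * (1 - α) ^ (n - k) *
      ((m.choose n : ℝ) * β ^ n * (1 - β) ^ (m - n)) =
    (m.choose k : ℝ) * (α * β) ^ k * (1 - α * β) ^ (m - k) := by
  rcases lt_or_ge m k with hmk | hkm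
  · rw [Nat.choose_eq_zero_of_lt hmk, Nat.cast_zero, zero_mul, zero_mul]
    exact sum_eq_zero fun n hn => by
      simp [Nat.choose_eq_zero_of_lt ((mem_range.1 hn).trans_le hmk)]
  obtain ⟨r, rfl⟩ := Nat.exists_eq_add_of_le hkm
  have hchoose (j : ℕ) : ((k + j).choose k : ℝ) * (k + r).choose (k + j) =
      (k + r).choose k * r.choose j := by
    have := Nat.choose_mul (n := k + r) (Nat.le_add_right k j)
    simp only [Nat.add_sub_cancel_left] at this
    exact_mod_cast (mul_comm _ _).trans this
  rw [add_assoc, sum_range_add, sum_eq_zero fun n hn => by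
    simp [Nat.choose_eq_zero_of_lt (mem_range.1 hn)], zero_add]
  simp only [Nat.add_sub_cancel_left, Nat.add_sub_add_left]
  calc ∑ j ∈ range (r + 1), ((k + j).choose k : ℝ) * α ^ k * (1 - α) ^ j *
        ((k + r).choose (k + j) * β ^ (k + j) * (1 - β) ^ (r - j))
      = ∑ j ∈ range (r + 1), (k + r).choose k * (α * β) ^ k *
          ((β * (1 - α)) ^ j * (1 - β) ^ (r - j) * r.choose j) :=
        sum_congr rfl fun j _ => by
          rw [mul_pow β]
          linear_combination (α ^ k * (1 - α) ^ j * β ^ (k + j) * (1 - β) ^ (r - j)) * hchoose j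
    _ = (k + r).choose k * (α * β) ^ k * (1 - α * β) ^ r := by
        rw [← mul_sum, ← add_pow]
        ring_nf

lemma thin_thin_s17 (hp : ∀ k, N < k → p k = 0) (α β : ℝ) (k : ℕ) :
    thin α (thin β p) k = thin (α * β) p k := by
  rw [thin_eq_sum (thin_eq_zero_of_lt hp β), thin_eq_sum hp]
  simp_rw [thin_eq_sum hp β, mul_sum]
  rw [sum_comm]
  refine sum_congr rfl fun m hm => ?_
  have hsub : range (m + 1) ⊆ range (N + 1) := range_subset_range.2 (mem_range.1 hm)
  rw [← sum_choose_mul_pow_mul_choose_mul_pow, sum_mul, ← sum_subset hsub]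
  · exact sum_congr rfl fun n _ => by ring
  · intro n _ hn
    simp [Nat.choose_eq_zero_of_lt (not_lt.1 (mt mem_range.2 hn))]

lemma tsum_thin (hp : ∀ k, N < k → p k = 0) (β : ℝ) : ∑' k, thin β p k = ∑' k, p k := by
  rw [← thin_zero_zero, ← thin_zero_zero, thin_thin_s17 hp, zero_mul]

lemma tendsto_thin_nhds_one (hp : ∀ k, N < k → p k = 0) (k : ℕ) :
    Tendsto (fun β => thin β p k) (𝓝 1) (𝓝 (p k)) := by
  have : Continuous fun β => thin β p k := by
    simp_rw [thin_eq_sum hp]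
    fun_prop
  simpa [thin_one_s17] using this.tendsto 1

lemma pos_of_le_of_pos_of_no_hole (hhole : ∀ n, 0 < p (n + 1) → 0 < p n) {j k : ℕ} (hjk : j ≤ k)
    (hk : 0 < p k) : 0 < p j :=
  Nat.le_induction (P := fun k _ => 0 < p k → 0 < p j) (fun h => h)
    (fun n _ ih h => ih (hhole n h)) k hjk hk

lemma eventually_thin_nonneg (hp0 : ∀ n, 0 ≤ p n) (hp : ∀ k, N < k → p k = 0)
    (hhole : ∀ n, 0 < p (n + 1) → 0 < p n) : ∀ᶠ β in 𝓝 1, ∀ k, 0 ≤ thin β p k := by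
  have hlow : ∀ᶠ β in 𝓝 1, ∀ k ∈ range (N + 1), 0 ≤ thin β p k := by
    rw [eventually_all_finset]
    intro k _
    rcases (hp0 k).eq_or_lt with hk | hk
    · refine Eventually.of_forall fun β => (thin_eq_zero (fun n hn => ?_) β).ge
      by_contra hne
      exact (pos_of_le_of_pos_of_no_hole hhole hn ((hp0 n).lt_of_ne' hne)).ne' hk.symm
    · exact ((tendsto_thin_nhds_one hp k).eventually_const_lt hk).mono fun _ => le_of_lt
  filter_upwards [hlow] with β hβ k
  by_cases hk : k ≤ N
  · exact hβ k (mem_range.2 (Nat.lt_succ_of_le hk))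
  · exact (thin_eq_zero_of_lt hp β k (not_le.1 hk)).ge

lemma exists_memM_lt_one (hp : IsPMF p) (hN : ∀ k, N < k → p k = 0)
    (hhole : ∀ n, 0 < p (n + 1) → 0 < p n) : ∃ α ∈ Set.Ico (0 : ℝ) 1, MemM α p := by
  obtain ⟨β, hβ, hβ1⟩ := ((eventually_nhdsWithin_of_eventually_nhds
    (eventually_thin_nonneg hp.1 hN hhole)).and (self_mem_nhdsWithin (s := Set.Ioi (1 : ℝ)))).exists
  have hq : IsPMF (thin β p) := by
    refine ⟨hβ, ?_⟩
    rw [(summable_of_ne_finset_zero (s := range (N + 1)) fun k hk =>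
      thin_eq_zero_of_lt hN β k (by simpa using hk)).hasSum_iff, tsum_thin hN, hp.2.tsum_eq]
  have hβ0 : β ≠ 0 := by positivity
  refine ⟨β⁻¹, ⟨by positivity, inv_lt_one_of_one_lt₀ hβ1⟩, thin β p, hq, fun k => ?_⟩
  rw [thin_thin_s17 hN, inv_mul_cancel₀ hβ0, thin_one_s17]

end Thinning

/-- for `X` with bounded support, `ρ(X) = 1` iff the support of `X`
contains a hole. -/
theorem stmt_17 (p : ℕ → ℝ) (hp : IsPMF p) (hb : ∃ N : ℕ, ∀ k, N < k → p k = 0) :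
    rho p = 1 ↔ ∃ n : ℕ, 1 ≤ n ∧ 0 < p n ∧ p (n - 1) = 0 := by
  set S := {α : ℝ | α ∈ Set.Icc (0 : ℝ) 1 ∧ MemM α p}
  have hS1 : (1 : ℝ) ∈ S := ⟨⟨zero_le_one, le_rfl⟩, p, hp, fun k => (thin_one_s17 p k).symm⟩
  have hSbdd : BddBelow S := ⟨0, fun _ hα => hα.1.1⟩
  constructor
  · intro hρ
    by_contra! hno
    obtain ⟨N, hN⟩ := hb
    obtain ⟨α, hα, hαp⟩ := exists_memM_lt_one hp hN fun n hn =>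
      (hp.1 n).lt_of_ne' (hno (n + 1) n.succ_pos hn)
    have : rho p ≤ α := csInf_le hSbdd ⟨Set.Ico_subset_Icc_self hα, hαp⟩
    linarith [hα.2]
  · rintro ⟨_ | n, hn, hpn, hpn1⟩
    · omega
    refine le_antisymm (csInf_le hSbdd hS1) (le_csInf ⟨1, hS1⟩ fun α hα => ?_)
    by_contra! hα1
    exact not_memM_of_hole hpn hpn1 hα.1.1 hα1 hα.2
end
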